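/- CoSaMP identification bound: Let y = Φx_S + e' with |S| = s. Suppose x^{n−1} is supported on S^{n−1} with |S^{n−1}| ≤ s. Let ΔS be a set of 2s indices containing the 2s largest magnitude entries of Φ*(y − Φx^{n−1}) (so ‖(Φ*(y−Φx^{n−1}))_{S∪S^{n−1}}‖₂ ≤ ‖(Φ*(y−Φx^{n−1}))_{ΔS}‖₂), and set S̃^n = S^{n−1} ∪ ΔS. Then ‖(x_S)_{complement of S̃^n}‖₂ ≤ √2·δ_{4s}·‖x_S − x^{n−1}‖₂ + √(2(1+δ_{3s}))·‖e'‖₂. -/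

import Mathlib

/-
Write the proxy `Φᵀ (y - Φ xⁿ⁻¹)` as `u + z` with `u = x_S - xⁿ⁻¹`, supported on `T = S ∪ Sⁿ⁻¹`,
and `z = (ΦᵀΦ - I) u + Φᵀ e'`. Outside `S̃ⁿ`, `x_S` agrees with `u` on `B = S \ S̃ⁿ ⊆ T \ ΔS`.
Since `ΔS` carries at least as much of `u + z` as `T`, `‖(u + z)_{T \ ΔS}‖ ≤ ‖(u + z)_{ΔS \ T}‖`,
and `u` vanishes on `ΔS \ T`; so `‖u_B‖ ≤ ‖z_{ΔS \ T}‖ + ‖z_B‖ ≤ √2 ‖z_W‖` for `W = (ΔS \ T) ∪ B`,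
a set of at most `3s` indices. Polarizing the RIP on the `4s` indices `W ∪ T` bounds
`((ΦᵀΦ - I) u)_W` by `δ₄ₛ ‖u‖`, and the upper RIP bound on `W` gives `‖(Φᵀ e')_W‖ ≤ √(1 + δ₃ₛ) ‖e'‖`.
-/

open Finset Matrix

noncomputable def enorm {n : ℕ} (x : Fin n → ℝ) : ℝ := Real.sqrt (∑ i, (x i)^2)

def restrict {n : ℕ} (U : Finset (Fin n)) (x : Fin n → ℝ) : Fin n → ℝ :=
  fun i => if i ∈ U then x i else 0

def sparse {n : ℕ} (s : ℕ) (x : Fin n → ℝ) : Prop :=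
  ∃ S : Finset (Fin n), S.card ≤ s ∧ ∀ i ∉ S, x i = 0

noncomputable def supp {n : ℕ} (x : Fin n → ℝ) : Finset (Fin n) := Finset.univ.filter (fun i => x i ≠ 0)

def RIP {m N : ℕ} (Φ : Matrix (Fin m) (Fin N) ℝ) (s : ℕ) (δ : ℝ) : Prop :=
  ∀ x : Fin N → ℝ, sparse s x →
    (1 - δ) * (_root_.enorm x)^2 ≤ (_root_.enorm (Φ.mulVec x))^2 ∧
    (_root_.enorm (Φ.mulVec x))^2 ≤ (1 + δ) * (_root_.enorm x)^2

local notation:max "‖" x "‖₂" => (_root_.enorm x : ℝ)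
local notation:max x:max " ↾ " U:max => (_root_.restrict U x : Fin _ → ℝ)

namespace CoSaMP

variable {n : ℕ}

theorem enorm_eq_norm (x : Fin n → ℝ) : ‖x‖₂ = ‖WithLp.toLp 2 x‖ := by
  simp [_root_.enorm, EuclideanSpace.norm_eq]

theorem enorm_nonneg (x : Fin n → ℝ) : 0 ≤ ‖x‖₂ :=
  Real.sqrt_nonneg _

theorem enorm_eq_zero {x : Fin n → ℝ} : ‖x‖₂ = 0 ↔ x = 0 := by
  simp [enorm_eq_norm]

theorem enorm_sq (x : Fin n → ℝ) : ‖x‖₂ ^ 2 = x ⬝ᵥ x := by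
  rw [enorm_eq_norm, ← real_inner_self_eq_norm_sq]
  rfl

theorem dotProduct_le_enorm_mul_enorm (x y : Fin n → ℝ) : x ⬝ᵥ y ≤ ‖x‖₂ * ‖y‖₂ := by
  simpa [enorm_eq_norm, EuclideanSpace.inner_toLp_toLp, dotProduct_comm y] using
    real_inner_le_norm (WithLp.toLp 2 x) (WithLp.toLp 2 y)

theorem enorm_add_le (x y : Fin n → ℝ) : ‖x + y‖₂ ≤ ‖x‖₂ + ‖y‖₂ := by
  simpa only [enorm_eq_norm, WithLp.toLp_add] using norm_add_le _ _

theorem enorm_sub_le (x y : Fin n → ℝ) : ‖x - y‖₂ ≤ ‖x‖₂ + ‖y‖₂ := by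
  simpa only [enorm_eq_norm, WithLp.toLp_sub] using norm_sub_le _ _

theorem enorm_smul (c : ℝ) (x : Fin n → ℝ) : ‖c • x‖₂ = |c| * ‖x‖₂ := by
  rw [enorm_eq_norm, enorm_eq_norm, WithLp.toLp_smul, norm_smul, Real.norm_eq_abs]

theorem restrict_add (U : Finset (Fin n)) (x y : Fin n → ℝ) :
    (x + y) ↾ U = x ↾ U + y ↾ U := by
  funext i
  by_cases hi : i ∈ U <;> simp [_root_.restrict, hi]

theorem restrict_sub (U : Finset (Fin n)) (x y : Fin n → ℝ) :
    (x - y) ↾ U = x ↾ U - y ↾ U := by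
  funext i
  by_cases hi : i ∈ U <;> simp [_root_.restrict, hi]

theorem enorm_restrict_sq (U : Finset (Fin n)) (x : Fin n → ℝ) :
    ‖x ↾ U‖₂ ^ 2 = ∑ i ∈ U, x i ^ 2 := by
  rw [_root_.enorm, Real.sq_sqrt (by positivity)]
  simp [_root_.restrict, ite_pow, Finset.sum_ite_mem]

theorem enorm_restrict_mono {U V : Finset (Fin n)} (h : U ⊆ V) (x : Fin n → ℝ) :
    ‖x ↾ U‖₂ ≤ ‖x ↾ V‖₂ := by
  refine le_of_pow_le_pow_left₀ two_ne_zero (enorm_nonneg _) ?_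
  rw [enorm_restrict_sq, enorm_restrict_sq]
  exact Finset.sum_le_sum_of_subset_of_nonneg h fun i _ _ => sq_nonneg _

theorem enorm_restrict_union_sq {A B : Finset (Fin n)} (h : Disjoint A B) (x : Fin n → ℝ) :
    ‖x ↾ (A ∪ B)‖₂ ^ 2 = ‖x ↾ A‖₂ ^ 2 + ‖x ↾ B‖₂ ^ 2 := by
  rw [enorm_restrict_sq, enorm_restrict_sq, enorm_restrict_sq, Finset.sum_union h]

theorem restrict_dotProduct_self (U : Finset (Fin n)) (x : Fin n → ℝ) :
    x ↾ U ⬝ᵥ x = ‖x ↾ U‖₂ ^ 2 := by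
  rw [enorm_sq]
  refine Finset.sum_congr rfl fun i _ => ?_
  by_cases hi : i ∈ U <;> simp [_root_.restrict, hi]

theorem le_of_sq_le_mul {a c : ℝ} (ha : 0 ≤ a) (hc : 0 ≤ c) (h : a ^ 2 ≤ a * c) : a ≤ c := by
  rcases ha.eq_or_lt with rfl | hpos
  · exact hc
  · exact le_of_mul_le_mul_left (by rwa [sq] at h) hpos

theorem enorm_restrict_sdiff_le {T D : Finset (Fin n)} {r : Fin n → ℝ}
    (h : ‖r ↾ T‖₂ ≤ ‖r ↾ D‖₂) : ‖r ↾ (T \ D)‖₂ ≤ ‖r ↾ (D \ T)‖₂ := by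
  have hT := enorm_restrict_union_sq (Finset.disjoint_sdiff_inter T D) r
  have hD := enorm_restrict_union_sq (Finset.disjoint_sdiff_inter D T) r
  rw [Finset.sdiff_union_inter] at hT hD
  rw [Finset.inter_comm] at hD
  have := pow_le_pow_left₀ (enorm_nonneg _) h 2
  exact le_of_pow_le_pow_left₀ two_ne_zero (enorm_nonneg _) (by linarith)

theorem enorm_restrict_add_enorm_restrict_le {A B : Finset (Fin n)} (h : Disjoint A B)
    (x : Fin n → ℝ) : ‖x ↾ A‖₂ + ‖x ↾ B‖₂ ≤ √2 * ‖x ↾ (A ∪ B)‖₂ := by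
  rw [← Real.sqrt_sq (enorm_nonneg (x ↾ (A ∪ B))), ← Real.sqrt_mul zero_le_two,
    enorm_restrict_union_sq h]
  refine Real.le_sqrt_of_sq_le ?_
  nlinarith [sq_nonneg (‖x ↾ A‖₂ - ‖x ↾ B‖₂)]

theorem enorm_restrict_le_of_selection {T D B : Finset (Fin n)} {u z : Fin n → ℝ}
    (hu : ∀ i ∉ T, u i = 0) (hB : B ⊆ T \ D) (hsel : ‖(u + z) ↾ T‖₂ ≤ ‖(u + z) ↾ D‖₂) :
    ‖u ↾ B‖₂ ≤ √2 * ‖z ↾ (D \ T ∪ B)‖₂ := by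
  have hoff : (u + z) ↾ (D \ T) = z ↾ (D \ T) := by
    funext i
    by_cases hi : i ∈ D \ T
    · simp [_root_.restrict, hi, hu i (Finset.mem_sdiff.1 hi).2]
    · simp [_root_.restrict, hi]
  have hdisj : Disjoint (D \ T) B :=
    Finset.disjoint_of_subset_right (hB.trans Finset.sdiff_subset) Finset.sdiff_disjoint
  calc ‖u ↾ B‖₂ = ‖(u + z) ↾ B - z ↾ B‖₂ := by rw [← restrict_sub, add_sub_cancel_right]
    _ ≤ ‖(u + z) ↾ B‖₂ + ‖z ↾ B‖₂ := enorm_sub_le _ _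
    _ ≤ ‖(u + z) ↾ (D \ T)‖₂ + ‖z ↾ B‖₂ := by
      gcongr
      exact (enorm_restrict_mono hB _).trans (enorm_restrict_sdiff_le hsel)
    _ ≤ √2 * ‖z ↾ (D \ T ∪ B)‖₂ := by
      rw [hoff]
      exact enorm_restrict_add_enorm_restrict_le hdisj z

theorem restrict_compl_union_eq {S S' D : Finset (Fin n)} {x x' : Fin n → ℝ}
    (hx : ∀ i ∉ S, x i = 0) (hx' : ∀ i ∉ S', x' i = 0) :
    x ↾ (S' ∪ D)ᶜ = (x - x') ↾ (S \ (S' ∪ D)) := by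
  funext i
  by_cases hS' : i ∈ S'
  · simp [_root_.restrict, hS']
  by_cases hD : i ∈ D
  · simp [_root_.restrict, hD]
  by_cases hS : i ∈ S
  · simp [_root_.restrict, hS', hD, hS, hx' i hS']
  · simp [_root_.restrict, hS, hx i hS]

end CoSaMP

namespace RIP

open CoSaMP

variable {m N t : ℕ} {Φ : Matrix (Fin m) (Fin N) ℝ} {δ : ℝ}

theorem abs_enorm_mulVec_sq_sub_le (hΦ : RIP Φ t δ) {x : Fin N → ℝ} (hx : sparse t x) :
    |‖Φ *ᵥ x‖₂ ^ 2 - ‖x‖₂ ^ 2| ≤ δ * ‖x‖₂ ^ 2 := by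
  obtain ⟨h₁, h₂⟩ := hΦ x hx
  rw [abs_le]
  constructor <;> linarith

theorem mul_enorm_nonneg (hΦ : RIP Φ t δ) {x : Fin N → ℝ} (hx : sparse t x) : 0 ≤ δ * ‖x‖₂ := by
  have h := (abs_nonneg _).trans (hΦ.abs_enorm_mulVec_sq_sub_le hx)
  rcases (enorm_nonneg x).eq_or_lt with h0 | hpos
  · rw [← h0, mul_zero]
  · exact mul_nonneg (nonneg_of_mul_nonneg_left h (by positivity)) hpos.le

theorem abs_dotProduct_sub_le_half (hΦ : RIP Φ t δ) {U : Finset (Fin N)} (hU : U.card ≤ t)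
    {u v : Fin N → ℝ} (hu : ∀ i ∉ U, u i = 0) (hv : ∀ i ∉ U, v i = 0) :
    |Φ *ᵥ u ⬝ᵥ Φ *ᵥ v - u ⬝ᵥ v| ≤ δ / 2 * (‖u‖₂ ^ 2 + ‖v‖₂ ^ 2) := by
  have hp := hΦ.abs_enorm_mulVec_sq_sub_le (x := u + v)
    ⟨U, hU, fun i hi => by simp [hu i hi, hv i hi]⟩
  have hq := hΦ.abs_enorm_mulVec_sq_sub_le (x := u - v)
    ⟨U, hU, fun i hi => by simp [hu i hi, hv i hi]⟩
  simp only [enorm_sq, mulVec_add, mulVec_sub, add_dotProduct, dotProduct_add, sub_dotProduct,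
    dotProduct_sub, dotProduct_comm v u, dotProduct_comm (Φ *ᵥ v) (Φ *ᵥ u)] at hp hq ⊢
  rw [abs_le] at hp hq ⊢
  constructor <;> nlinarith [hp.1, hp.2, hq.1, hq.2]

theorem abs_dotProduct_sub_le (hΦ : RIP Φ t δ) {U : Finset (Fin N)} (hU : U.card ≤ t)
    {u v : Fin N → ℝ} (hu : ∀ i ∉ U, u i = 0) (hv : ∀ i ∉ U, v i = 0) :
    |Φ *ᵥ u ⬝ᵥ Φ *ᵥ v - u ⬝ᵥ v| ≤ δ * ‖u‖₂ * ‖v‖₂ := by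
  rcases (enorm_nonneg u).eq_or_lt with hu0 | hupos
  · obtain rfl := enorm_eq_zero.1 hu0.symm
    simp [← hu0]
  rcases (enorm_nonneg v).eq_or_lt with hv0 | hvpos
  · obtain rfl := enorm_eq_zero.1 hv0.symm
    simp [← hv0]
  -- polarization applied to the balanced pair `‖v‖ • u`, `‖u‖ • v`
  have h := hΦ.abs_dotProduct_sub_le_half hU (u := ‖v‖₂ • u) (v := ‖u‖₂ • v)
    (fun i hi => by simp [hu i hi]) (fun i hi => by simp [hv i hi])
  simp only [mulVec_smul, smul_dotProduct, dotProduct_smul, smul_eq_mul, CoSaMP.enorm_smul,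
    abs_of_pos hupos, abs_of_pos hvpos] at h
  rw [← mul_sub, ← mul_sub, abs_mul, abs_mul, abs_of_pos hupos, abs_of_pos hvpos] at h
  exact le_of_mul_le_mul_left (by linarith) (mul_pos hupos hvpos)

theorem enorm_restrict_gram_sub_le (hΦ : RIP Φ t δ) {U W : Finset (Fin N)}
    (hWU : (W ∪ U).card ≤ t) {u : Fin N → ℝ} (hu : ∀ i ∉ U, u i = 0) :
    ‖(Φᵀ *ᵥ (Φ *ᵥ u) - u) ↾ W‖₂ ≤ δ * ‖u‖₂ := by
  set v := (Φᵀ *ᵥ (Φ *ᵥ u) - u) ↾ W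
  have hu' : ∀ i ∉ W ∪ U, u i = 0 := fun i hi => hu i fun h => hi (mem_union_right _ h)
  have hv : ∀ i ∉ W ∪ U, v i = 0 := fun i hi => if_neg fun h => hi (mem_union_left _ h)
  have hsq : ‖v‖₂ ^ 2 ≤ δ * ‖v‖₂ * ‖u‖₂ := by
    calc ‖v‖₂ ^ 2 = Φ *ᵥ v ⬝ᵥ Φ *ᵥ u - v ⬝ᵥ u := by
          rw [← restrict_dotProduct_self, dotProduct_sub, dotProduct_transpose_mulVec,
            dotProduct_comm (Φ *ᵥ u)]
      _ ≤ δ * ‖v‖₂ * ‖u‖₂ := (le_abs_self _).trans (hΦ.abs_dotProduct_sub_le hWU hv hu')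
  exact le_of_sq_le_mul (enorm_nonneg v) (hΦ.mul_enorm_nonneg ⟨W ∪ U, hWU, hu'⟩)
    (by linarith)

theorem enorm_restrict_transpose_mulVec_le (hΦ : RIP Φ t δ) {W : Finset (Fin N)}
    (hW : W.card ≤ t) (e : Fin m → ℝ) : ‖(Φᵀ *ᵥ e) ↾ W‖₂ ≤ √(1 + δ) * ‖e‖₂ := by
  set v := (Φᵀ *ᵥ e) ↾ W
  have hΦv : ‖Φ *ᵥ v‖₂ ≤ √(1 + δ) * ‖v‖₂ := by
    rw [← Real.sqrt_sq (enorm_nonneg v), ← Real.sqrt_mul' _ (sq_nonneg _)]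
    exact Real.le_sqrt_of_sq_le (hΦ v ⟨W, hW, fun i hi => if_neg hi⟩).2
  have hsq : ‖v‖₂ ^ 2 ≤ √(1 + δ) * ‖v‖₂ * ‖e‖₂ := by
    calc ‖v‖₂ ^ 2 = Φ *ᵥ v ⬝ᵥ e := by
          rw [← restrict_dotProduct_self, dotProduct_transpose_mulVec, dotProduct_comm]
      _ ≤ ‖Φ *ᵥ v‖₂ * ‖e‖₂ := dotProduct_le_enorm_mul_enorm _ _
      _ ≤ √(1 + δ) * ‖v‖₂ * ‖e‖₂ := by gcongr; exact enorm_nonneg e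
  exact le_of_sq_le_mul (enorm_nonneg v) (mul_nonneg (Real.sqrt_nonneg _) (enorm_nonneg e))
    (by linarith)

theorem enorm_restrict_perturbation_le {t' : ℕ} {δ' : ℝ} (hΦ : RIP Φ t δ) (hΦ' : RIP Φ t' δ')
    {U W : Finset (Fin N)} (hWU : (W ∪ U).card ≤ t) (hW : W.card ≤ t') {u : Fin N → ℝ}
    (hu : ∀ i ∉ U, u i = 0) (e : Fin m → ℝ) :
    ‖(Φᵀ *ᵥ (Φ *ᵥ u) - u + Φᵀ *ᵥ e) ↾ W‖₂ ≤ δ * ‖u‖₂ + √(1 + δ') * ‖e‖₂ := by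
  rw [restrict_add]
  exact (CoSaMP.enorm_add_le _ _).trans (add_le_add (hΦ.enorm_restrict_gram_sub_le hWU hu)
    (hΦ'.enorm_restrict_transpose_mulVec_le hW e))

end RIP

open CoSaMP in
theorem stmt13 {m N : ℕ} (Φ : Matrix (Fin m) (Fin N) ℝ) (s : ℕ) (δ4s δ3s : ℝ)
    (h4 : RIP Φ (4*s) δ4s) (h3 : RIP Φ (3*s) δ3s)
    (S Sn1 ΔS : Finset (Fin N)) (hS : S.card = s) (hSn1 : Sn1.card ≤ s) (hΔS : ΔS.card = 2*s)
    (xS xn1 : Fin N → ℝ) (hxS : ∀ i ∉ S, xS i = 0) (hxn1 : ∀ i ∉ Sn1, xn1 i = 0)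
    (e' y : Fin m → ℝ) (hy : y = fun i => Φ.mulVec xS i + e' i)
    (hsel : _root_.enorm (restrict (S ∪ Sn1) (Φ.transpose.mulVec (fun j => y j - Φ.mulVec xn1 j))) ≤
            _root_.enorm (restrict ΔS (Φ.transpose.mulVec (fun j => y j - Φ.mulVec xn1 j)))) :
    _root_.enorm (restrict (Sn1 ∪ ΔS)ᶜ xS) ≤
      Real.sqrt 2 * δ4s * _root_.enorm (fun i => xS i - xn1 i) +
      Real.sqrt (2*(1+δ3s)) * _root_.enorm e' := by
  set u : Fin N → ℝ := xS - xn1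
  set T := S ∪ Sn1
  set z := (Φᵀ *ᵥ (Φ *ᵥ u) - u) + Φᵀ *ᵥ e'
  set B := S \ (Sn1 ∪ ΔS)
  set W := ΔS \ T ∪ B
  have hu : ∀ i ∉ T, u i = 0 := fun i hi => by
    simp only [T, mem_union, not_or] at hi
    simp [u, hxS i hi.1, hxn1 i hi.2]
  have hresidual : Φᵀ *ᵥ (fun j => y j - (Φ *ᵥ xn1) j) = u + z := by
    have : (fun j => y j - (Φ *ᵥ xn1) j) = Φ *ᵥ u + e' := by
      funext j
      simp only [hy, u, mulVec_sub, Pi.add_apply, Pi.sub_apply]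
      ring
    rw [this, mulVec_add]
    simp only [z]
    abel
  have hBT : B ⊆ T \ ΔS := fun i hi => by
    simp only [B, T, mem_sdiff, mem_union] at hi ⊢
    tauto
  have hW : W.card ≤ 3 * s :=
    calc W.card ≤ (ΔS \ T).card + B.card := card_union_le _ _
      _ ≤ ΔS.card + S.card := add_le_add (card_le_card sdiff_subset) (card_le_card sdiff_subset)
      _ = 3 * s := by omega
  have hWT : (W ∪ T).card ≤ 4 * s := by
    have hsub : W ∪ T ⊆ ΔS ∪ T := fun i => by
      simp only [W, B, T, mem_union, mem_sdiff]
      tauto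
    calc (W ∪ T).card ≤ ΔS.card + (S.card + Sn1.card) := (card_le_card hsub).trans
          ((card_union_le _ _).trans (add_le_add le_rfl (card_union_le _ _)))
      _ ≤ 4 * s := by omega
  calc ‖xS ↾ (Sn1 ∪ ΔS)ᶜ‖₂ = ‖u ↾ B‖₂ := by rw [restrict_compl_union_eq hxS hxn1]
    _ ≤ √2 * ‖z ↾ W‖₂ := enorm_restrict_le_of_selection hu hBT (hresidual ▸ hsel)
    _ ≤ √2 * (δ4s * ‖u‖₂ + √(1 + δ3s) * ‖e'‖₂) := by
      gcongr
      exact h4.enorm_restrict_perturbation_le h3 hWT hW hu e'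
    _ = √2 * δ4s * ‖u‖₂ + √(2 * (1 + δ3s)) * ‖e'‖₂ := by
      rw [Real.sqrt_mul zero_le_two]
      ring
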